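/- arXiv:1207.5067 — 4 statements merged into one kernel-verified Lean document; each statement's English description precedes it below -/
import Mathlib

section
/- Let A₁, A₂, A₃ be square matrices of sizes n₁, n₂, n₃ and B₁ (n₁×n₂), B₂ (n₂×n₃), C₁ (n₁×n₃). Define the block upper-triangular matrix M = [[A₁, B₁, C₁], [0, A₂, B₂], [0, 0, A₃]]. Then for s ≥ 0 the top-right n₁×n₃ block of exp(sM) equals ∫₀ˢ exp(A₁(s−u)) C₁ exp(A₃ u) du + ∫₀ˢ ∫₀ᵘ exp(A₁(s−u)) B₁ exp(A₂(u−r)) B₂ exp(A₃ r) dr du. -/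
/-!
For a block upper-triangular matrix `M = [[A, B], [0, D]]`, the matrix function
`G t = [[exp (t A), ∫₀ᵗ exp ((t - u) A) B exp (u D) du], [0, exp (t D)]]` satisfies `G' = M G`
and `G 0 = 1`: the diagonal blocks are exponentials and the top-right block solves
`Y' = A Y + B exp (t D)` by variation of constants. Hence `G t = exp (t M)`, because
`exp (-t M) G t` has zero derivative. Viewing the 3×3 block matrix as
`[[A₁, [B₁ C₁]], [0, N]]` with `N = [[A₂, B₂], [0, A₃]]`, this gives its top-right block as
`∫₀ˢ exp ((s - u) A₁) [B₁ C₁] exp (u N) du`, and applying it once more to `exp (u N)` splits the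
last column of the integrand into the two terms of the formula.
-/

open Matrix MeasureTheory intervalIntegral NormedSpace
open scoped Matrix.Norms.Operator

section Calculus

variable {l m n o : Type*}

theorem HasDerivAt.matrix_mul [Fintype m] [Fintype n] {f : ℝ → Matrix l m ℝ}
    {g : ℝ → Matrix m n ℝ} {f' : Matrix l m ℝ} {g' : Matrix m n ℝ} {t : ℝ}
    (hf : HasDerivAt f f' t) (hg : HasDerivAt g g' t) :
    HasDerivAt (fun t => f t * g t) (f' * g t + f t * g') t := by
  refine hasDerivAt_pi.2 fun i => hasDerivAt_pi.2 fun j => ?_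
  have := HasDerivAt.fun_sum (u := Finset.univ) fun k _ =>
    (hasDerivAt_pi.1 (hasDerivAt_pi.1 hf i) k).fun_mul (hasDerivAt_pi.1 (hasDerivAt_pi.1 hg k) j)
  simpa only [Matrix.mul_apply, Matrix.add_apply, Finset.sum_add_distrib] using this

theorem HasDerivAt.matrix_fromBlocks [Fintype n] [Fintype o]
    {f : ℝ → Matrix l n ℝ} {g : ℝ → Matrix l o ℝ}
    {h : ℝ → Matrix m n ℝ} {k : ℝ → Matrix m o ℝ}
    {f' : Matrix l n ℝ} {g' : Matrix l o ℝ} {h' : Matrix m n ℝ} {k' : Matrix m o ℝ} {t : ℝ}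
    (hf : HasDerivAt f f' t) (hg : HasDerivAt g g' t) (hh : HasDerivAt h h' t)
    (hk : HasDerivAt k k' t) :
    HasDerivAt (fun t => fromBlocks (f t) (g t) (h t) (k t)) (fromBlocks f' g' h' k') t := by
  refine hasDerivAt_pi.2 fun i => hasDerivAt_pi.2 fun j => ?_
  rcases i with i | i <;> rcases j with j | j
  · exact hasDerivAt_pi.1 (hasDerivAt_pi.1 hf i) j
  · exact hasDerivAt_pi.1 (hasDerivAt_pi.1 hg i) j
  · exact hasDerivAt_pi.1 (hasDerivAt_pi.1 hh i) j
  · exact hasDerivAt_pi.1 (hasDerivAt_pi.1 hk i) j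

namespace Matrix

theorem intervalIntegral_apply [Fintype m] [Fintype n] {f : ℝ → Matrix m n ℝ}
    (hf : Continuous f) (a b : ℝ) (i : m) (j : n) :
    (∫ t in a..b, f t) i j = ∫ t in a..b, f t i j :=
  ((entryLinearMap ℝ ℝ i j).toContinuousLinearMap.intervalIntegral_comp_comm
    (hf.intervalIntegrable a b)).symm

theorem mul_intervalIntegral [Fintype l] [Fintype m] [Fintype n] {f : ℝ → Matrix m n ℝ}
    (hf : Continuous f) (a b : ℝ) (X : Matrix l m ℝ) :
    X * ∫ t in a..b, f t = ∫ t in a..b, X * f t :=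
  ((mulLeftLinearMap n ℝ X).toContinuousLinearMap.intervalIntegral_comp_comm
    (hf.intervalIntegrable a b)).symm

section Exp

variable [Fintype m] [DecidableEq m]

theorem exp_smul_mul_exp_smul (A : Matrix m m ℝ) (x y : ℝ) :
    exp (x • A) * exp (y • A) = exp ((x + y) • A) := by
  rw [add_smul, exp_add_of_commute _ _ (((Commute.refl A).smul_left x).smul_right y)]

/-- `hasDerivAt_exp_smul_const'` restated with the instances of `Matrix` itself rather than
those of the operator norm, so that it rewrites against ordinary matrix expressions. -/
theorem hasDerivAt_exp_smul (A : Matrix m m ℝ) (t : ℝ) :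
    HasDerivAt (fun t : ℝ => exp (t • A)) (A * exp (t • A)) t :=
  hasDerivAt_exp_smul_const' A t

@[fun_prop]
theorem continuous_exp_smul (A : Matrix m m ℝ) : Continuous fun t : ℝ => exp (t • A) :=
  continuous_iff_continuousAt.2 fun t => (hasDerivAt_exp_smul A t).continuousAt

theorem eq_exp_smul_mul_of_hasDerivAt {M : Matrix m m ℝ} {G : ℝ → Matrix m m ℝ}
    (hG : ∀ t, HasDerivAt G (M * G t) t) (t : ℝ) : G t = exp (t • M) * G 0 := by
  have hK : ∀ t, HasDerivAt (fun t => exp (t • -M) * G t) 0 t := fun t => by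
    refine ((hasDerivAt_exp_smul (-M) t).fun_mul (hG t)).congr_deriv ?_
    have hcomm := ((Commute.refl M).neg_left.smul_left t).exp_left
    rw [Matrix.neg_mul, ← hcomm.eq, Matrix.neg_mul, Matrix.mul_assoc, neg_add_cancel]
  have hconst := is_const_of_deriv_eq_zero (fun t => (hK t).differentiableAt)
    (fun t => (hK t).deriv) t 0
  rw [zero_smul, exp_zero, Matrix.one_mul, smul_neg, ← neg_smul] at hconst
  rw [← hconst, ← Matrix.mul_assoc, exp_smul_mul_exp_smul, add_neg_cancel, zero_smul, exp_zero,
    Matrix.one_mul]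

theorem intervalIntegral_exp_sub_smul_mul [Fintype n] (A : Matrix m m ℝ)
    {F : ℝ → Matrix m n ℝ} (hF : Continuous F) (a t : ℝ) :
    ∫ u in a..t, exp ((t - u) • A) * F u = exp (t • A) * ∫ u in a..t, exp ((-u) • A) * F u := by
  rw [mul_intervalIntegral (by fun_prop)]
  simp_rw [← Matrix.mul_assoc, exp_smul_mul_exp_smul, sub_eq_add_neg]

theorem hasDerivAt_intervalIntegral_exp_sub_smul_mul [Fintype n] (A : Matrix m m ℝ)
    {F : ℝ → Matrix m n ℝ} (hF : Continuous F) (a t : ℝ) :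
    HasDerivAt (fun t => ∫ u in a..t, exp ((t - u) • A) * F u)
      (A * (∫ u in a..t, exp ((t - u) • A) * F u) + F t) t := by
  have hprimitive := ((show Continuous fun u : ℝ => exp ((-u) • A) * F u by fun_prop)
    |>.integral_hasStrictDerivAt a t).hasDerivAt
  simp_rw [intervalIntegral_exp_sub_smul_mul A hF a]
  refine ((hasDerivAt_exp_smul A t).matrix_mul hprimitive).congr_deriv ?_
  rw [← Matrix.mul_assoc (exp (t • A)), exp_smul_mul_exp_smul, add_neg_cancel, zero_smul,
    exp_zero, Matrix.one_mul, Matrix.mul_assoc]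

theorem exp_smul_fromBlocks_zero₂₁ [Fintype n] [DecidableEq n] (A : Matrix m m ℝ)
    (B : Matrix m n ℝ) (D : Matrix n n ℝ) (s : ℝ) :
    exp (s • fromBlocks A B 0 D) =
      fromBlocks (exp (s • A)) (∫ u in (0 : ℝ)..s, exp ((s - u) • A) * B * exp (u • D)) 0
        (exp (s • D)) := by
  have hF : Continuous fun u : ℝ => B * exp (u • D) := by fun_prop
  set G : ℝ → Matrix (m ⊕ n) (m ⊕ n) ℝ := fun t => fromBlocks (exp (t • A))
    (∫ u in (0 : ℝ)..t, exp ((t - u) • A) * (B * exp (u • D))) 0 (exp (t • D))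
  have hG : ∀ t, HasDerivAt G (fromBlocks A B 0 D * G t) t := fun t => by
    refine ((hasDerivAt_exp_smul A t).matrix_fromBlocks
      (hasDerivAt_intervalIntegral_exp_sub_smul_mul A hF 0 t) (hasDerivAt_const t 0)
      (hasDerivAt_exp_smul D t)).congr_deriv ?_
    simp [G, fromBlocks_multiply]
  have hG0 : G 0 = 1 := by simp [G, fromBlocks_one]
  simpa [G, hG0, Matrix.mul_assoc] using (eq_exp_smul_mul_of_hasDerivAt hG s).symm

end Exp

end Matrix

end Calculus

theorem vanLoan_three_blocks_top_right_general {n₁ n₂ n₃ : ℕ}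
    (A₁ : Matrix (Fin n₁) (Fin n₁) ℝ) (A₂ : Matrix (Fin n₂) (Fin n₂) ℝ)
    (A₃ : Matrix (Fin n₃) (Fin n₃) ℝ)
    (B₁ : Matrix (Fin n₁) (Fin n₂) ℝ) (B₂ : Matrix (Fin n₂) (Fin n₃) ℝ)
    (C₁ : Matrix (Fin n₁) (Fin n₃) ℝ) (s : ℝ)
    (M : Matrix (Fin n₁ ⊕ (Fin n₂ ⊕ Fin n₃)) (Fin n₁ ⊕ (Fin n₂ ⊕ Fin n₃)) ℝ)
    (hM : M = Matrix.fromBlocks A₁ (Matrix.fromCols B₁ C₁) 0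
        (Matrix.fromBlocks A₂ B₂ 0 A₃)) :
    ∀ (i : Fin n₁) (k : Fin n₃),
      NormedSpace.exp (s • M) (Sum.inl i) (Sum.inr (Sum.inr k)) =
        (∫ u in (0:ℝ)..s,
          (NormedSpace.exp ((s - u) • A₁) * C₁ * NormedSpace.exp (u • A₃)) i k) +
        ∫ u in (0:ℝ)..s, ∫ r in (0:ℝ)..u,
          (NormedSpace.exp ((s - u) • A₁) * B₁ * NormedSpace.exp ((u - r) • A₂) * B₂ *
            NormedSpace.exp (r • A₃)) i k := by
  intro i k
  have hintegrand : ∀ u : ℝ,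
      (exp ((s - u) • A₁) * fromCols B₁ C₁ * exp (u • fromBlocks A₂ B₂ 0 A₃)) i (Sum.inr k) =
        (exp ((s - u) • A₁) * C₁ * exp (u • A₃)) i k + ∫ r in (0:ℝ)..u,
          (exp ((s - u) • A₁) * B₁ * exp ((u - r) • A₂) * B₂ * exp (r • A₃)) i k := by
    intro u
    rw [exp_smul_fromBlocks_zero₂₁, Matrix.mul_assoc, fromCols_mul_fromBlocks, Matrix.mul_zero,
      add_zero, mul_fromCols, fromCols_apply_inr, Matrix.mul_add, ← Matrix.mul_assoc _ B₁,
      mul_intervalIntegral (by fun_prop), Matrix.add_apply, intervalIntegral_apply (by fun_prop),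
      add_comm]
    simp only [Matrix.mul_assoc]
  rw [hM, exp_smul_fromBlocks_zero₂₁, fromBlocks_apply₁₂, intervalIntegral_apply (by fun_prop)]
  simp_rw [hintegrand]
  exact integral_add (Continuous.intervalIntegrable (by fun_prop) _ _)
    ((continuous_parametric_intervalIntegral_of_continuous (by fun_prop)
      continuous_id).intervalIntegrable _ _)

/-- Van Loan's block formula (3×3 case): the top-right block of the exponential of a
3×3 block upper-triangular matrix. -/
theorem vanLoan_three_blocks_top_right {n₁ n₂ n₃ : ℕ}
    (A₁ : Matrix (Fin n₁) (Fin n₁) ℝ) (A₂ : Matrix (Fin n₂) (Fin n₂) ℝ)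
    (A₃ : Matrix (Fin n₃) (Fin n₃) ℝ)
    (B₁ : Matrix (Fin n₁) (Fin n₂) ℝ) (B₂ : Matrix (Fin n₂) (Fin n₃) ℝ)
    (C₁ : Matrix (Fin n₁) (Fin n₃) ℝ) (s : ℝ) (hs : 0 ≤ s)
    (M : Matrix (Fin n₁ ⊕ (Fin n₂ ⊕ Fin n₃)) (Fin n₁ ⊕ (Fin n₂ ⊕ Fin n₃)) ℝ)
    (hM : M = Matrix.fromBlocks A₁ (Matrix.fromCols B₁ C₁) 0
        (Matrix.fromBlocks A₂ B₂ 0 A₃)) :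
    ∀ (i : Fin n₁) (k : Fin n₃),
      NormedSpace.exp (s • M) (Sum.inl i) (Sum.inr (Sum.inr k)) =
        (∫ u in (0:ℝ)..s,
          (NormedSpace.exp ((s - u) • A₁) * C₁ * NormedSpace.exp (u • A₃)) i k) +
        ∫ u in (0:ℝ)..s, ∫ r in (0:ℝ)..u,
          (NormedSpace.exp ((s - u) • A₁) * B₁ * NormedSpace.exp ((u - r) • A₂) * B₂ *
            NormedSpace.exp (r • A₃)) i k :=
  vanLoan_three_blocks_top_right_general A₁ A₂ A₃ B₁ B₂ C₁ s M hM
end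

section
/- Let A be a d×d real matrix, D a symmetric d×d matrix, and define the 2d×2d block matrix M = [[A, D], [0, −Aᵀ]]. Write exp(tM) = [[F(t), H(t)], [0, exp(−Aᵀ t)]]. Then F(t) = exp(At) and P(t) := H(t) F(t)ᵀ satisfies the Lyapunov differential equation P'(t) = A P(t) + P(t) Aᵀ + D with P(0) = 0. -/
/-!
Differentiating `exp (t • M)` once as `M * exp (t • M)` and once as `exp (t • M) * M` and reading
off blocks gives `F' = F A`, `H' = A H + D W` and `W' = -Aᵀ W`, where `W` is the lower-right block.
Since `F 0 = W 0 = 1`, the products `F(t) exp(-tA)` and `exp(tAᵀ) W(t)` have zero derivative, so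
`F(t) = exp(tA)` and `W(t) = exp(-tAᵀ)`. Then `P(t) = H(t) exp(tAᵀ)`, and the product rule gives
`P' = (A H + D W) exp(tAᵀ) + H exp(tAᵀ) Aᵀ = A P + D + P Aᵀ`.
-/

open Matrix NormedSpace

theorem mul_eq_of_hasDerivAt_mul_of_hasDerivAt_neg_mul {𝔸 : Type*} [NormedRing 𝔸]
    [NormedAlgebra ℝ 𝔸] {u v : ℝ → 𝔸} {X : 𝔸} (hu : ∀ t, HasDerivAt u (u t * X) t)
    (hv : ∀ t, HasDerivAt v (-(X * v t)) t) (t : ℝ) : u t * v t = u 0 * v 0 := by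
  have hderiv : ∀ s, HasDerivAt (fun s => u s * v s) 0 s := fun s => by
    simpa [mul_assoc] using (hu s).fun_mul (hv s)
  exact is_const_of_deriv_eq_zero (fun s => (hderiv s).differentiableAt)
    (fun s => (hderiv s).deriv) t 0

section

attribute [local instance] Matrix.linftyOpNormedAddCommGroup Matrix.linftyOpNormedSpace
  Matrix.linftyOpNormedRing Matrix.linftyOpNormedAlgebra

variable {m n p q : Type*} [Fintype m] [Fintype n] [Fintype p] [Fintype q]

theorem HasDerivAt.matrix_apply {f : ℝ → Matrix m n ℝ} {f' : Matrix m n ℝ} {t : ℝ}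
    (h : HasDerivAt f f' t) (i : m) (j : n) : HasDerivAt (fun s => f s i j) (f' i j) t :=
  (entryLinearMap ℝ ℝ i j).toContinuousLinearMap.hasFDerivAt.comp_hasDerivAt t h

theorem HasDerivAt.matrix_submatrix {f : ℝ → Matrix m n ℝ} {f' : Matrix m n ℝ} {t : ℝ}
    (h : HasDerivAt f f' t) (r : p → m) (c : q → n) :
    HasDerivAt (fun s => (f s).submatrix r c) (f'.submatrix r c) t :=
  (LinearMap.toContinuousLinearMap
    { toFun := fun X : Matrix m n ℝ => X.submatrix r c
      map_add' := fun _ _ => rfl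
      map_smul' := fun _ _ => rfl }).hasFDerivAt.comp_hasDerivAt t h

theorem toBlocks₁₁_mul_fromBlocks_zero (E : Matrix (m ⊕ n) (m ⊕ n) ℝ) (A : Matrix m m ℝ)
    (B : Matrix m n ℝ) (C : Matrix n n ℝ) :
    (E * fromBlocks A B 0 C).toBlocks₁₁ = E.toBlocks₁₁ * A := by
  conv_lhs => rw [← fromBlocks_toBlocks E, fromBlocks_multiply]
  simp

theorem toBlocks₁₂_fromBlocks_zero_mul (E : Matrix (m ⊕ n) (m ⊕ n) ℝ) (A : Matrix m m ℝ)
    (B : Matrix m n ℝ) (C : Matrix n n ℝ) :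
    (fromBlocks A B 0 C * E).toBlocks₁₂ = A * E.toBlocks₁₂ + B * E.toBlocks₂₂ := by
  conv_lhs => rw [← fromBlocks_toBlocks E, fromBlocks_multiply]
  simp

theorem toBlocks₂₂_fromBlocks_zero_mul (E : Matrix (m ⊕ n) (m ⊕ n) ℝ) (A : Matrix m m ℝ)
    (B : Matrix m n ℝ) (C : Matrix n n ℝ) :
    (fromBlocks A B 0 C * E).toBlocks₂₂ = C * E.toBlocks₂₂ := by
  conv_lhs => rw [← fromBlocks_toBlocks E, fromBlocks_multiply]
  simp

variable [DecidableEq m] [DecidableEq n]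

theorem Matrix.exp_mul_exp_neg (X : Matrix m m ℝ) : exp X * exp (-X) = 1 := by
  rw [← Matrix.exp_add_of_commute _ _ (Commute.neg_right (Commute.refl X)), add_neg_cancel,
    exp_zero]

theorem Matrix.exp_neg_mul_exp (X : Matrix m m ℝ) : exp (-X) * exp X = 1 := by
  simpa using Matrix.exp_mul_exp_neg (-X)

theorem eq_exp_smul_of_hasDerivAt_mul_right {f : ℝ → Matrix m m ℝ} {X : Matrix m m ℝ}
    (hf : ∀ t, HasDerivAt f (f t * X) t) (hf0 : f 0 = 1) (t : ℝ) : f t = exp (t • X) := by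
  have hconst := mul_eq_of_hasDerivAt_mul_of_hasDerivAt_neg_mul (v := fun s => exp (s • -X)) hf
    (fun s => by rw [← neg_mul]; exact hasDerivAt_exp_smul_const' (-X) s) t
  calc f t = f t * exp (t • -X) * exp (t • X) := by
        rw [mul_assoc, smul_neg, Matrix.exp_neg_mul_exp, mul_one]
    _ = exp (t • X) := by rw [hconst, hf0, zero_smul, exp_zero, one_mul, one_mul]

theorem eq_exp_smul_of_hasDerivAt_mul_left {g : ℝ → Matrix m m ℝ} {X : Matrix m m ℝ}
    (hg : ∀ t, HasDerivAt g (X * g t) t) (hg0 : g 0 = 1) (t : ℝ) : g t = exp (t • X) := by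
  have hconst := mul_eq_of_hasDerivAt_mul_of_hasDerivAt_neg_mul (u := fun s => exp (s • -X))
    (X := -X) (fun s => hasDerivAt_exp_smul_const (-X) s)
    (fun s => by rw [neg_mul, neg_neg]; exact hg s) t
  calc g t = exp (t • X) * (exp (t • -X) * g t) := by
        rw [← mul_assoc, smul_neg, Matrix.exp_mul_exp_neg, one_mul]
    _ = exp (t • X) := by rw [hconst, hg0, zero_smul, exp_zero, one_mul, mul_one]

variable {A : Matrix m m ℝ} {B : Matrix m n ℝ} {C : Matrix n n ℝ}

theorem hasDerivAt_toBlocks₁₁_exp_smul_fromBlocks_zero (t : ℝ) :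
    HasDerivAt (fun s => (exp (s • fromBlocks A B 0 C)).toBlocks₁₁)
      ((exp (t • fromBlocks A B 0 C)).toBlocks₁₁ * A) t := by
  rw [← toBlocks₁₁_mul_fromBlocks_zero _ A B C]
  exact (hasDerivAt_exp_smul_const _ t).matrix_submatrix Sum.inl Sum.inl

theorem hasDerivAt_toBlocks₁₂_exp_smul_fromBlocks_zero (t : ℝ) :
    HasDerivAt (fun s => (exp (s • fromBlocks A B 0 C)).toBlocks₁₂)
      (A * (exp (t • fromBlocks A B 0 C)).toBlocks₁₂
        + B * (exp (t • fromBlocks A B 0 C)).toBlocks₂₂) t := by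
  rw [← toBlocks₁₂_fromBlocks_zero_mul]
  exact (hasDerivAt_exp_smul_const' _ t).matrix_submatrix Sum.inl Sum.inr

theorem hasDerivAt_toBlocks₂₂_exp_smul_fromBlocks_zero (t : ℝ) :
    HasDerivAt (fun s => (exp (s • fromBlocks A B 0 C)).toBlocks₂₂)
      (C * (exp (t • fromBlocks A B 0 C)).toBlocks₂₂) t := by
  rw [← toBlocks₂₂_fromBlocks_zero_mul _ A B C]
  exact (hasDerivAt_exp_smul_const' _ t).matrix_submatrix Sum.inr Sum.inr

theorem toBlocks₁₁_exp_smul_fromBlocks_zero (t : ℝ) :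
    (exp (t • fromBlocks A B 0 C)).toBlocks₁₁ = exp (t • A) :=
  eq_exp_smul_of_hasDerivAt_mul_right hasDerivAt_toBlocks₁₁_exp_smul_fromBlocks_zero
    (by rw [zero_smul, exp_zero, ← fromBlocks_one, toBlocks_fromBlocks₁₁]) t

theorem toBlocks₂₂_exp_smul_fromBlocks_zero (t : ℝ) :
    (exp (t • fromBlocks A B 0 C)).toBlocks₂₂ = exp (t • C) :=
  eq_exp_smul_of_hasDerivAt_mul_left hasDerivAt_toBlocks₂₂_exp_smul_fromBlocks_zero
    (by rw [zero_smul, exp_zero, ← fromBlocks_one, toBlocks_fromBlocks₂₂]) t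

noncomputable def lyapunovBlockSolution (A D : Matrix m m ℝ) (t : ℝ) : Matrix m m ℝ :=
  (exp (t • fromBlocks A D 0 (-Aᵀ))).toBlocks₁₂ * (exp (t • fromBlocks A D 0 (-Aᵀ))).toBlocks₁₁ᵀ

theorem hasDerivAt_lyapunovBlockSolution (A D : Matrix m m ℝ) (t : ℝ) :
    HasDerivAt (lyapunovBlockSolution A D)
      (A * lyapunovBlockSolution A D t + lyapunovBlockSolution A D t * Aᵀ + D) t := by
  have hP : lyapunovBlockSolution A D =
      fun s => (exp (s • fromBlocks A D 0 (-Aᵀ))).toBlocks₁₂ * exp (s • Aᵀ) := by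
    funext s
    rw [lyapunovBlockSolution, toBlocks₁₁_exp_smul_fromBlocks_zero, ← exp_transpose,
      transpose_smul]
  have hWY : (exp (t • fromBlocks A D 0 (-Aᵀ))).toBlocks₂₂ * exp (t • Aᵀ) = 1 := by
    rw [toBlocks₂₂_exp_smul_fromBlocks_zero, smul_neg, Matrix.exp_neg_mul_exp]
  rw [hP]
  refine ((hasDerivAt_toBlocks₁₂_exp_smul_fromBlocks_zero t).fun_mul
    (hasDerivAt_exp_smul_const Aᵀ t)).congr_deriv ?_
  set E := exp (t • fromBlocks A D 0 (-Aᵀ))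
  set Y := exp (t • Aᵀ)
  -- `fun_mul` multiplies through the `NormedRing` instance; restating the goal lets `hWY` match.
  show (A * E.toBlocks₁₂ + D * E.toBlocks₂₂) * Y + E.toBlocks₁₂ * (Y * Aᵀ) =
    A * (E.toBlocks₁₂ * Y) + E.toBlocks₁₂ * Y * Aᵀ + D
  rw [add_mul, mul_assoc D, hWY]
  noncomm_ring

end

theorem lyapunov_via_block_exp_general {d : ℕ} (A D : Matrix (Fin d) (Fin d) ℝ)
    (M : Matrix (Fin d ⊕ Fin d) (Fin d ⊕ Fin d) ℝ)
    (hM : M = Matrix.fromBlocks A D 0 (-Aᵀ))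
    (F H P : ℝ → Matrix (Fin d) (Fin d) ℝ)
    (hF : ∀ t, F t = Matrix.of fun i j => NormedSpace.exp (t • M) (Sum.inl i) (Sum.inl j))
    (hH : ∀ t, H t = Matrix.of fun i j => NormedSpace.exp (t • M) (Sum.inl i) (Sum.inr j))
    (hP : ∀ t, P t = H t * (F t)ᵀ) :
    (∀ t, F t = NormedSpace.exp (t • A)) ∧
    P 0 = 0 ∧
    (∀ t i j, HasDerivAt (fun s => P s i j) ((A * P t + P t * Aᵀ + D) i j) t) := by
  subst hM
  have hP_eq : P = lyapunovBlockSolution A D := funext fun t => by rw [hP, hH, hF]; rfl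
  subst hP_eq
  refine ⟨fun t => (hF t).trans (toBlocks₁₁_exp_smul_fromBlocks_zero t), ?_, fun t i j => ?_⟩
  · simp [lyapunovBlockSolution, ← fromBlocks_one]
  · exact (hasDerivAt_lyapunovBlockSolution A D t).matrix_apply i j

/-- For `M = [[A, D], [0, −Aᵀ]]` with `D` symmetric, writing
`exp(tM) = [[F(t), H(t)], [0, exp(−Aᵀt)]]`, one has `F(t) = exp(At)`, and
`P(t) = H(t) F(t)ᵀ` solves the Lyapunov equation `P' = A P + P Aᵀ + D`, `P(0) = 0`. -/
theorem lyapunov_via_block_exp {d : ℕ} (A D : Matrix (Fin d) (Fin d) ℝ)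
    (hD : Dᵀ = D)
    (M : Matrix (Fin d ⊕ Fin d) (Fin d ⊕ Fin d) ℝ)
    (hM : M = Matrix.fromBlocks A D 0 (-Aᵀ))
    (F H P : ℝ → Matrix (Fin d) (Fin d) ℝ)
    (hF : ∀ t, F t = Matrix.of fun i j => NormedSpace.exp (t • M) (Sum.inl i) (Sum.inl j))
    (hH : ∀ t, H t = Matrix.of fun i j => NormedSpace.exp (t • M) (Sum.inl i) (Sum.inr j))
    (hP : ∀ t, P t = H t * (F t)ᵀ) :
    (∀ t, F t = NormedSpace.exp (t • A)) ∧
    P 0 = 0 ∧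
    (∀ t i j, HasDerivAt (fun s => P s i j) ((A * P t + P t * Aᵀ + D) i j) t) :=
  lyapunov_via_block_exp_general A D M hM F H P hF hH hP
end

section
/- Let P : ℝ → Matrix (Fin d) (Fin d) ℝ satisfy P'(t) = A P(t) + P(t) Aᵀ + D with P(t₀) = P₀, where A, D are constant d×d matrices. Then P(t) = exp(A(t−t₀)) P₀ exp(Aᵀ(t−t₀)) + ∫₀^{t−t₀} exp(A s) D exp(Aᵀ s) ds for all t ≥ t₀. -/
/-!
Variation of constants, for `P' = A P + P B + D` in any real Banach algebra (here `B = Aᵀ`):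
for fixed `t`, the function `F u = exp ((t - u) • A) * P u * exp ((t - u) • B)` has derivative
`exp ((t - u) • A) * D * exp ((t - u) • B)`, since the terms `A * P u` and `P u * B` cancel
against the derivatives of the two exponentials. Integrating `F'` from `t₀` to `t` and
substituting `s = t - u` gives the formula.
-/

open Matrix MeasureTheory intervalIntegral

noncomputable def matIntegral {m n : Type*} [Fintype m] [Fintype n]
    (f : ℝ → Matrix m n ℝ) (a b : ℝ) : Matrix m n ℝ :=
  Matrix.of fun i j => ∫ u in a..b, f u i j

open NormedSpace

section BanachAlgebra

variable {𝔸 : Type*} [NormedRing 𝔸] [NormedAlgebra ℝ 𝔸] [CompleteSpace 𝔸]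

theorem continuous_exp_smul_const (A : 𝔸) : Continuous fun s : ℝ => exp (s • A) :=
  continuous_iff_continuousAt.2 fun s => (hasDerivAt_exp_smul_const A s).continuousAt

theorem continuous_exp_smul_mul_mul_exp_smul (A B D : 𝔸) :
    Continuous fun s : ℝ => exp (s • A) * D * exp (s • B) :=
  ((continuous_exp_smul_const A).mul continuous_const).mul (continuous_exp_smul_const B)

theorem hasDerivAt_exp_sub_smul_mul_mul_exp_sub_smul (A B : 𝔸) (t : ℝ) {P : ℝ → 𝔸}
    {P' : 𝔸} {u : ℝ} (hP : HasDerivAt P P' u) :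
    HasDerivAt (fun v => exp ((t - v) • A) * P v * exp ((t - v) • B))
      (exp ((t - u) • A) * (P' - A * P u - P u * B) * exp ((t - u) • B)) u := by
  have hA := (hasDerivAt_exp_smul_const A (t - u)).comp_const_sub t u
  have hB := (hasDerivAt_exp_smul_const' B (t - u)).comp_const_sub t u
  convert (hA.fun_mul hP).fun_mul hB using 1
  noncomm_ring

theorem sylvester_ode_solution {A B D : 𝔸} {P : ℝ → 𝔸}
    (hP : ∀ t, HasDerivAt P (A * P t + P t * B + D) t) (t₀ t : ℝ) :
    P t = exp ((t - t₀) • A) * P t₀ * exp ((t - t₀) • B) +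
      ∫ s in 0..t - t₀, exp (s • A) * D * exp (s • B) := by
  have hF : ∀ u, HasDerivAt (fun v => exp ((t - v) • A) * P v * exp ((t - v) • B))
      (exp ((t - u) • A) * D * exp ((t - u) • B)) u := fun u => by
    convert hasDerivAt_exp_sub_smul_mul_mul_exp_sub_smul A B t (hP u) using 2
    abel_nf
  have hFTC := integral_eq_sub_of_hasDerivAt (fun u _ => hF u)
    (((continuous_exp_smul_mul_mul_exp_smul A B D).comp
      (continuous_sub_left t)).intervalIntegrable t₀ t)
  rw [integral_comp_sub_left (fun s => exp (s • A) * D * exp (s • B))] at hFTC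
  simp only [sub_self, zero_smul, exp_zero, one_mul, mul_one] at hFTC
  rw [hFTC, add_sub_cancel]

end BanachAlgebra

-- The operator norm makes matrices a Banach algebra; derivatives and interval integrals depend
-- only on the topology, so this choice of norm is immaterial.
attribute [local instance] Matrix.linftyOpNormedAddCommGroup Matrix.linftyOpNormedSpace
  Matrix.linftyOpNormedRing Matrix.linftyOpNormedAlgebra

section Matrix

variable {m n : Type*}

theorem Matrix.hasDerivAt_iff [Fintype n] {f : ℝ → Matrix m n ℝ} {f' : Matrix m n ℝ} {t : ℝ} :
    HasDerivAt f f' t ↔ ∀ i j, HasDerivAt (fun s => f s i j) (f' i j) t :=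
  hasDerivAt_pi.trans (forall_congr' fun _ => hasDerivAt_pi)

theorem matIntegral_eq_intervalIntegral [Fintype m] [Fintype n] {f : ℝ → Matrix m n ℝ}
    (hf : Continuous f) (a b : ℝ) :
    matIntegral f a b = ∫ u in a..b, f u := by
  ext i j
  let entry : Matrix m n ℝ →L[ℝ] ℝ :=
    { toLinearMap := Matrix.entryLinearMap ℝ ℝ i j
      cont := (continuous_apply j).comp (continuous_apply i) }
  exact entry.intervalIntegral_comp_comm (hf.intervalIntegrable a b)

end Matrix

/-- The solution of the Lyapunov differential equation
`P' = A P + P Aᵀ + D`, `P(t₀) = P₀`. -/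
theorem lyapunov_ode_solution {d : ℕ} (A D P₀ : Matrix (Fin d) (Fin d) ℝ)
    (t₀ : ℝ) (P : ℝ → Matrix (Fin d) (Fin d) ℝ)
    (hderiv : ∀ t i j, HasDerivAt (fun s => P s i j) ((A * P t + P t * Aᵀ + D) i j) t)
    (hinit : P t₀ = P₀) :
    ∀ t, t₀ ≤ t → P t =
      NormedSpace.exp ((t - t₀) • A) * P₀ * NormedSpace.exp ((t - t₀) • Aᵀ) +
      matIntegral (fun s => NormedSpace.exp (s • A) * D * NormedSpace.exp (s • Aᵀ))
        0 (t - t₀) := by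
  intro t _
  rw [matIntegral_eq_intervalIntegral (f := fun s => exp (s • A) * D * exp (s • Aᵀ))
    (continuous_exp_smul_mul_mul_exp_smul A Aᵀ D), ← hinit]
  exact sylvester_ode_solution (fun s => Matrix.hasDerivAt_iff.2 (hderiv s)) t₀ t
end

section
/- Let A₁ (n₁×n₁), A₂ (n₂×n₂) be square matrices and B (n₁×n₂). If the top-right block of exp(s·[[A₁,B],[0,A₂]]) is denoted G(s), then G satisfies the ODE G'(s) = A₁ G(s) + B exp(A₂ s) with G(0) = 0. -/
/-!
Every power of `M = [[A₁, B], [0, A₂]]` is again block upper triangular with lower-right block the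
same power of `A₂`, so the lower-right block of `exp (s • M)` is `exp (s • A₂)`. Differentiating
`exp (s • M)` entrywise gives `M * exp (s • M)`, whose top-right block is
`A₁ * G s + B * exp (s • A₂)`.
-/

open Matrix NormedSpace

namespace Matrix

variable {l m α 𝕂 : Type*} [Fintype l] [Fintype m]

theorem toBlocks₁₂_fromBlocks_zero₂₁_mul [Semiring α] (A : Matrix l l α) (B : Matrix l m α)
    (D : Matrix m m α) (X : Matrix (l ⊕ m) (l ⊕ m) α) :
    (fromBlocks A B 0 D * X).toBlocks₁₂ = A * X.toBlocks₁₂ + B * X.toBlocks₂₂ := by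
  conv_lhs => rw [← fromBlocks_toBlocks X, fromBlocks_multiply]
  rfl

variable [DecidableEq l] [DecidableEq m]

theorem fromBlocks_zero₂₁_pow [Semiring α] (A : Matrix l l α) (B : Matrix l m α)
    (D : Matrix m m α) (k : ℕ) :
    ∃ C, fromBlocks A B 0 D ^ k = fromBlocks (A ^ k) C 0 (D ^ k) := by
  induction k with
  | zero => exact ⟨0, by rw [pow_zero, pow_zero, pow_zero, fromBlocks_one]⟩
  | succ k ih =>
    obtain ⟨C, hC⟩ := ih
    exact ⟨A ^ k * B + C * D, by simp [pow_succ, hC, fromBlocks_multiply]⟩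

section RCLike

variable [RCLike 𝕂]

theorem exp_series_hasSum_exp' (X : Matrix l l 𝕂) :
    HasSum (fun k => (k.factorial : 𝕂)⁻¹ • X ^ k) (exp X) :=
  open scoped Norms.Operator in
  -- instance search does not find completeness of the operator-normed matrices over `𝕂`
  have := FiniteDimensional.proper_rclike 𝕂 (Matrix l l 𝕂)
  NormedSpace.exp_series_hasSum_exp' X

theorem toBlocks₂₂_exp_fromBlocks_zero₂₁ (A : Matrix l l 𝕂) (B : Matrix l m 𝕂)
    (D : Matrix m m 𝕂) : (exp (fromBlocks A B 0 D)).toBlocks₂₂ = exp D := by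
  ext i j
  refine (Pi.hasSum.mp (Pi.hasSum.mp (exp_series_hasSum_exp' (fromBlocks A B 0 D)) (.inr i))
    (.inr j)).unique ?_
  convert Pi.hasSum.mp (Pi.hasSum.mp (exp_series_hasSum_exp' D) i) j using 2 with k
  obtain ⟨C, hC⟩ := fromBlocks_zero₂₁_pow A B D k
  simp [hC]

theorem hasDerivAt_exp_smul_apply (M : Matrix l l 𝕂) (s : 𝕂) (i j : l) :
    HasDerivAt (fun u : 𝕂 => exp (u • M) i j) ((M * exp (s • M)) i j) s :=
  open scoped Norms.Operator in
  have := FiniteDimensional.proper_rclike 𝕂 (Matrix l l 𝕂)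
  (entryLinearMap 𝕂 𝕂 i j).toContinuousLinearMap.hasFDerivAt.comp_hasDerivAt s
    (hasDerivAt_exp_smul_const' M s)

theorem hasDerivAt_exp_smul_fromBlocks_zero₂₁_apply_inl_inr (A : Matrix l l 𝕂)
    (B : Matrix l m 𝕂) (D : Matrix m m 𝕂) (s : 𝕂) (i : l) (j : m) :
    HasDerivAt (fun u : 𝕂 => exp (u • fromBlocks A B 0 D) (.inl i) (.inr j))
      ((A * (exp (s • fromBlocks A B 0 D)).toBlocks₁₂ + B * exp (s • D)) i j) s := by
  have hsmul : s • fromBlocks A B 0 D = fromBlocks (s • A) (s • B) 0 (s • D) := by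
    rw [fromBlocks_smul, smul_zero]
  convert hasDerivAt_exp_smul_apply (fromBlocks A B 0 D) s (.inl i) (.inr j) using 1
  rw [← toBlocks₂₂_exp_fromBlocks_zero₂₁ (s • A) (s • B) (s • D), ← hsmul,
    ← toBlocks₁₂_fromBlocks_zero₂₁_mul]
  rfl

end RCLike

end Matrix

/-- The top-right block `G(s)` of `exp(s·[[A₁,B],[0,A₂]])` satisfies
`G'(s) = A₁ G(s) + B exp(A₂ s)` with `G(0) = 0`. -/
theorem block_exp_top_right_ode {n₁ n₂ : ℕ}
    (A₁ : Matrix (Fin n₁) (Fin n₁) ℝ) (A₂ : Matrix (Fin n₂) (Fin n₂) ℝ)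
    (B : Matrix (Fin n₁) (Fin n₂) ℝ)
    (M : Matrix (Fin n₁ ⊕ Fin n₂) (Fin n₁ ⊕ Fin n₂) ℝ)
    (hM : M = Matrix.fromBlocks A₁ B 0 A₂)
    (G : ℝ → Matrix (Fin n₁) (Fin n₂) ℝ)
    (hG : ∀ s, G s = Matrix.of fun i j => NormedSpace.exp (s • M) (Sum.inl i) (Sum.inr j)) :
    G 0 = 0 ∧
    ∀ s i j, HasDerivAt (fun u => G u i j)
      ((A₁ * G s + B * NormedSpace.exp (s • A₂)) i j) s := by
  subst hM
  obtain rfl : G = fun s => (exp (s • fromBlocks A₁ B 0 A₂)).toBlocks₁₂ := funext hG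
  refine ⟨?_, hasDerivAt_exp_smul_fromBlocks_zero₂₁_apply_inl_inr A₁ B A₂⟩
  beta_reduce
  rw [zero_smul, exp_zero, ← fromBlocks_one, toBlocks_fromBlocks₁₂]
end
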